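/- Let s, σ ∈ ℝ. Set u = cos σ·k − sin σ·j, h = cos σ·j + sin σ·k, q = exp(s·h), p = exp(s·h) * exp((s·cos σ)·u) * exp(−s·h), and b = exp(s·h) * exp((−σ)·u) * i * exp(−s·h) (the bypass parameterization of K'_s from Lemma 7.3). Then: (1) re(b⁻¹ * q * i * q⁻¹) = cos σ; (2) re(p⁻¹ * p⁻¹) = cos(2s·cos σ); (3) re(b⁻¹ * p⁻¹ * p⁻¹ * q * i * q⁻¹) = cos(σ − 2s·cos σ). (The character computations (7.8)–(7.10) in the proof of Proposition 7.6 of the paper for the bypass tangle, identifying the image curve π₀ ∘ U_s(K'_s) as a figure-eight curve σ ↦ (cos σ, cos(2s cos σ), cos(σ ∓ 2s cos σ)) around the bottom-left corner of the pillowcase.) -/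

import Mathlib

open Quaternion

/-- The imaginary unit `i` of the quaternions. -/
noncomputable def qi : ℍ[ℝ] := ⟨0, 1, 0, 0⟩
/-- The imaginary unit `j` of the quaternions. -/
noncomputable def qj : ℍ[ℝ] := ⟨0, 0, 1, 0⟩
/-- The imaginary unit `k` of the quaternions. -/
noncomputable def qk : ℍ[ℝ] := ⟨0, 0, 0, 1⟩

/-!
Every quantity is a conjugate by `E = exp (s • h)` (note `q = E` and `exp ((-s) • h) = E⁻¹`) of a
word in `i` and the one-parameter group `t ↦ exp (t • u)`. Conjugation preserves real parts, so
the three characters reduce to `re (exp (t • u)) = cos t` for the pure unit quaternion `u`, with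
`t = σ`, `-2 s cos σ` and `σ - 2 s cos σ`.
-/

open NormedSpace

namespace NormedSpace

variable {𝔸 : Type*}

/- Mathlib's `exp_neg` and `exp_add_of_commute` assume `[NormedAlgebra ℚ 𝔸]`, which `ℍ[ℝ]` does
not carry; these versions use the radius of convergence over `ℝ` instead. -/

theorem exp_add_smul [NormedRing 𝔸] [NormedAlgebra ℝ 𝔸] [CompleteSpace 𝔸] (a b : ℝ) (x : 𝔸) :
    exp ((a + b) • x) = exp (a • x) * exp (b • x) := by
  rw [add_smul]
  exact exp_add_of_commute_of_mem_ball (((Commute.refl x).smul_left a).smul_right b)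
    ((expSeries_radius_eq_top ℝ 𝔸).symm ▸ edist_lt_top _ _)
    ((expSeries_radius_eq_top ℝ 𝔸).symm ▸ edist_lt_top _ _)

variable [NormedDivisionRing 𝔸] [NormedAlgebra ℝ 𝔸] [CompleteSpace 𝔸]

theorem exp_neg_of_real_algebra (x : 𝔸) : exp (-x) = (exp x)⁻¹ :=
  exp_neg_of_mem_ball ℝ <| (expSeries_radius_eq_top ℝ 𝔸).symm ▸ edist_lt_top _ _

theorem exp_ne_zero_of_real_algebra (x : 𝔸) : exp x ≠ 0 :=
  let := invertibleExpOfMemBall (𝕂 := ℝ) ((expSeries_radius_eq_top ℝ 𝔸).symm ▸ edist_lt_top x _)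
  Invertible.ne_zero _

end NormedSpace

namespace Quaternion

theorem re_mul_comm {R : Type*} [CommRing R] (a b : ℍ[R]) : (a * b).re = (b * a).re := by
  simp only [re_mul]
  ring

section LinearOrderedField

variable {R : Type*} [Field R] [LinearOrder R] [IsStrictOrderedRing R]

theorem re_mul_mul_inv {a : ℍ[R]} (ha : a ≠ 0) (x : ℍ[R]) : (a * x * a⁻¹).re = x.re := by
  rw [re_mul_comm, ← mul_assoc, inv_mul_cancel₀ ha, one_mul]

theorem re_inv_mul_mul {a : ℍ[R]} (ha : a ≠ 0) (x : ℍ[R]) : (a⁻¹ * x * a).re = x.re := by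
  simpa using re_mul_mul_inv (inv_ne_zero ha) x

end LinearOrderedField

theorem re_exp_smul {v : ℍ[ℝ]} (hre : v.re = 0) (hnorm : ‖v‖ = 1) (t : ℝ) :
    (exp (t • v)).re = Real.cos t := by
  simp [re_exp, hre, norm_smul, hnorm]

theorem re_characters_of_conj {E a u b p : ℍ[ℝ]} (hE : E ≠ 0) (ha : a ≠ 0)
    (hu_re : u.re = 0) (hu_norm : ‖u‖ = 1) {σ t : ℝ} (hb : b = E * exp ((-σ) • u) * a * E⁻¹)
    (hp : p = E * exp (t • u) * E⁻¹) :
    (b⁻¹ * E * a * E⁻¹).re = Real.cos σ ∧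
    (p⁻¹ * p⁻¹).re = Real.cos (2 * t) ∧
    (b⁻¹ * p⁻¹ * p⁻¹ * E * a * E⁻¹).re = Real.cos (σ - 2 * t) := by
  have hexp_inv (r : ℝ) : (exp (r • u))⁻¹ = exp ((-r) • u) := by
    rw [neg_smul, exp_neg_of_real_algebra]
  have hb_inv : b⁻¹ = E * a⁻¹ * exp (σ • u) * E⁻¹ := by
    rw [hb, mul_inv_rev, mul_inv_rev, mul_inv_rev, inv_inv, hexp_inv, neg_neg]
    simp only [mul_assoc]
  have hp_inv : p⁻¹ = E * exp ((-t) • u) * E⁻¹ := by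
    rw [hp, mul_inv_rev, mul_inv_rev, inv_inv, hexp_inv, mul_assoc]
  have hre (r : ℝ) : (E * (a⁻¹ * exp (r • u) * a) * E⁻¹).re = Real.cos r := by
    rw [re_mul_mul_inv hE, re_inv_mul_mul ha, re_exp_smul hu_re hu_norm]
  refine ⟨?_, ?_, ?_⟩
  · have hword : b⁻¹ * E * a * E⁻¹ = E * (a⁻¹ * exp (σ • u) * a) * E⁻¹ := by
      rw [hb_inv]
      simp only [mul_assoc, inv_mul_cancel_left₀ hE]
    rw [hword, hre]
  · have hword : p⁻¹ * p⁻¹ = E * exp ((-t + -t) • u) * E⁻¹ := by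
      rw [hp_inv, exp_add_smul]
      simp only [mul_assoc, inv_mul_cancel_left₀ hE]
    rw [hword, re_mul_mul_inv hE, re_exp_smul hu_re hu_norm, ← Real.cos_neg]
    ring_nf
  · have hword : b⁻¹ * p⁻¹ * p⁻¹ * E * a * E⁻¹ =
        E * (a⁻¹ * exp ((σ + -t + -t) • u) * a) * E⁻¹ := by
      rw [hb_inv, hp_inv, exp_add_smul, exp_add_smul]
      simp only [mul_assoc, inv_mul_cancel_left₀ hE]
    rw [hword, hre]
    ring_nf

end Quaternion

@[simp] lemma qj_re : qj.re = 0 := rfl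
@[simp] lemma qj_imI : qj.imI = 0 := rfl
@[simp] lemma qj_imJ : qj.imJ = 1 := rfl
@[simp] lemma qj_imK : qj.imK = 0 := rfl
@[simp] lemma qk_re : qk.re = 0 := rfl
@[simp] lemma qk_imI : qk.imI = 0 := rfl
@[simp] lemma qk_imJ : qk.imJ = 0 := rfl
@[simp] lemma qk_imK : qk.imK = 1 := rfl

lemma qi_ne_zero : qi ≠ 0 := fun h => one_ne_zero (congrArg QuaternionAlgebra.imI h : (1 : ℝ) = 0)

lemma re_cos_smul_qk_sub_sin_smul_qj (σ : ℝ) : (Real.cos σ • qk - Real.sin σ • qj).re = 0 := by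
  simp

lemma norm_cos_smul_qk_sub_sin_smul_qj (σ : ℝ) : ‖Real.cos σ • qk - Real.sin σ • qj‖ = 1 := by
  rw [← pow_eq_one_iff_of_nonneg (norm_nonneg _) two_ne_zero, sq, ← normSq_eq_norm_mul_self,
    normSq_def']
  simp

theorem bypass_character_computation_general (s σ : ℝ)
    (u h q p b : ℍ[ℝ])
    (hu : u = Real.cos σ • qk - Real.sin σ • qj)
    (hq : q = NormedSpace.exp (s • h))
    (hp : p = NormedSpace.exp (s • h) * NormedSpace.exp ((s * Real.cos σ) • u) *
      NormedSpace.exp ((-s) • h))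
    (hb : b = NormedSpace.exp (s • h) * NormedSpace.exp ((-σ) • u) * qi *
      NormedSpace.exp ((-s) • h)) :
    (b⁻¹ * q * qi * q⁻¹).re = Real.cos σ ∧
    (p⁻¹ * p⁻¹).re = Real.cos (2 * s * Real.cos σ) ∧
    (b⁻¹ * p⁻¹ * p⁻¹ * q * qi * q⁻¹).re = Real.cos (σ - 2 * s * Real.cos σ) := by
  have hE_inv : exp ((-s) • h) = (exp (s • h))⁻¹ := by rw [neg_smul, exp_neg_of_real_algebra]
  rw [hE_inv] at hp hb
  subst hq
  rw [mul_assoc 2 s]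
  exact re_characters_of_conj (exp_ne_zero_of_real_algebra _) qi_ne_zero
    (hu ▸ re_cos_smul_qk_sub_sin_smul_qj σ) (hu ▸ norm_cos_smul_qk_sub_sin_smul_qj σ) hb hp

/-- The character computations (7.8)–(7.10) in the proof of Proposition 7.6 of the paper for
the bypass tangle: along the parameterization of `K'_s`, the three pillowcase characters are
`(cos σ, cos(2s cos σ), cos(σ − 2s cos σ))`, identifying the image curve `π₀ ∘ U_s(K'_s)` as
a figure-eight curve around the bottom-left corner of the pillowcase. -/
theorem bypass_character_computation (s σ : ℝ)
    (u h q p b : ℍ[ℝ])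
    (hu : u = Real.cos σ • qk - Real.sin σ • qj)
    (hh : h = Real.cos σ • qj + Real.sin σ • qk)
    (hq : q = NormedSpace.exp (s • h))
    (hp : p = NormedSpace.exp (s • h) * NormedSpace.exp ((s * Real.cos σ) • u) *
      NormedSpace.exp ((-s) • h))
    (hb : b = NormedSpace.exp (s • h) * NormedSpace.exp ((-σ) • u) * qi *
      NormedSpace.exp ((-s) • h)) :
    (b⁻¹ * q * qi * q⁻¹).re = Real.cos σ ∧
    (p⁻¹ * p⁻¹).re = Real.cos (2 * s * Real.cos σ) ∧
    (b⁻¹ * p⁻¹ * p⁻¹ * q * qi * q⁻¹).re = Real.cos (σ - 2 * s * Real.cos σ) :=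
  bypass_character_computation_general s σ u h q p b hu hq hp hb
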